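/- arXiv:2210.09700 — 2 statements merged into one kernel-verified Lean document; each statement's English description precedes it below -/
import Mathlib

section
/- Let d ≥ 1 and let s, r be integers with 1 ≤ s ≤ d, 1 ≤ r ≤ d, s + r ≥ d + 1, and s + r ≡ d + 1 (mod 2). Then there exist a cycle σ₁ of length s and a cycle σ₂ of length r in the symmetric group S_d such that the product σ₁ σ₂ is a cycle of length d. -/
/-!
The `d`-cycle `formPerm (p ++ x :: q)` factors as `formPerm (p ++ [x]) * formPerm (x :: q)`,
two cycles sharing the single point `x`; this settles `s + r = d + 1`. If `σ₁ * σ₂` is the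
`d`-cycle and both factors are shorter than `d`, every point is moved by one of them, so there
are `a` moved only by `σ₁` and `b` moved only by `σ₂`. Then `σ₁ * swap a b` and `swap a b * σ₂`
are cycles one point longer with the same product, which raises `s + r` by `2`.
-/

/-- The cycle type of a permutation of `Fin n`, as a partition of `n`:
the lengths of the cycles in the disjoint cycle decomposition, counting
each fixed point as a part equal to `1`. -/
def fullCycleType {n : ℕ} (σ : Equiv.Perm (Fin n)) : Multiset ℕ :=
  σ.cycleType + Multiset.replicate (n - σ.support.card) 1

open Equiv Equiv.Perm

namespace List

variable {α : Type*}

theorem exists_isRotated_append_singleton {l : List α} {a : α} (ha : a ∈ l) :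
    ∃ u, l ~r u ++ [a] := by
  obtain ⟨s, t, rfl⟩ := append_of_mem ha
  exact ⟨t ++ s, by simpa using isRotated_append (l := s ++ [a]) (l' := t)⟩

theorem exists_isRotated_cons {l : List α} {a : α} (ha : a ∈ l) :
    ∃ u, l ~r a :: u := by
  obtain ⟨s, t, rfl⟩ := append_of_mem ha
  exact ⟨t ++ s, by simpa using isRotated_append (l := s) (l' := a :: t)⟩

variable [DecidableEq α]

theorem formPerm_append_singleton_mul_formPerm_cons (l : List α) (x : α) (l' : List α) :
    formPerm (l ++ [x]) * formPerm (x :: l') = formPerm (l ++ x :: l') := by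
  induction l' generalizing l x with
  | nil => simp
  | cons y l' ih =>
    rw [formPerm_cons_cons, ← mul_assoc, ← formPerm_append_pair]
    simpa using ih (l ++ [x]) y

-- Cycles are carried as lists so that the identity, as `formPerm [x]`, is a `1`-cycle like any other.
structure IsCycleFactorization (L l₁ l₂ : List α) : Prop where
  nodup_left : l₁.Nodup
  nodup_right : l₂.Nodup
  mem_iff : ∀ x, x ∈ L ↔ x ∈ l₁ ∨ x ∈ l₂
  formPerm_mul_formPerm : formPerm l₁ * formPerm l₂ = formPerm L

namespace IsCycleFactorization

variable {L l₁ l₂ : List α}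

theorem append_cons {p q : List α} {x : α} (h : (p ++ x :: q).Nodup) :
    IsCycleFactorization (p ++ x :: q) (p ++ [x]) (x :: q) where
  nodup_left := h.sublist (by simp)
  nodup_right := h.sublist (by simp)
  mem_iff y := by simp only [mem_append, mem_cons, not_mem_nil]; tauto
  formPerm_mul_formPerm := formPerm_append_singleton_mul_formPerm_cons p x q

theorem isRotated {l₁' l₂' : List α} (h : IsCycleFactorization L l₁ l₂)
    (h₁ : l₁ ~r l₁') (h₂ : l₂ ~r l₂') : IsCycleFactorization L l₁' l₂' where
  nodup_left := h₁.nodup_iff.1 h.nodup_left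
  nodup_right := h₂.nodup_iff.1 h.nodup_right
  mem_iff x := by rw [h.mem_iff, h₁.mem_iff, h₂.mem_iff]
  formPerm_mul_formPerm := by
    rw [← formPerm_eq_of_isRotated h.nodup_left h₁, ← formPerm_eq_of_isRotated h.nodup_right h₂,
      h.formPerm_mul_formPerm]

theorem grow {u v : List α} {a b : α} (h : IsCycleFactorization L (u ++ [a]) (b :: v))
    (hb : b ∉ u ++ [a]) (ha : a ∉ b :: v) :
    IsCycleFactorization L (u ++ [a, b]) (a :: b :: v) where
  nodup_left := by simpa using h.nodup_left.append (nodup_singleton b) (by simpa using hb)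
  nodup_right := nodup_cons.2 ⟨ha, h.nodup_right⟩
  mem_iff x := by
    rw [h.mem_iff]
    simp only [mem_append, mem_cons, not_mem_nil]
    tauto
  formPerm_mul_formPerm := by
    rw [formPerm_append_pair, formPerm_cons_cons, mul_assoc, ← mul_assoc (Equiv.swap a b),
      swap_mul_self, one_mul, h.formPerm_mul_formPerm]

theorem exists_length_succ (h : IsCycleFactorization L l₁ l₂) (hL : L.Nodup)
    (h₁ : l₁.length < L.length) (h₂ : l₂.length < L.length) :
    ∃ l₁' l₂', IsCycleFactorization L l₁' l₂' ∧
      l₁'.length = l₁.length + 1 ∧ l₂'.length = l₂.length + 1 := by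
  obtain ⟨b, hbL, hb₁⟩ : ∃ b ∈ L, b ∉ l₁ := by
    by_contra! hsub
    exact (hL.subperm hsub).length_le.not_gt h₁
  obtain ⟨a, haL, ha₂⟩ : ∃ a ∈ L, a ∉ l₂ := by
    by_contra! hsub
    exact (hL.subperm hsub).length_le.not_gt h₂
  obtain ⟨u, hu⟩ := exists_isRotated_append_singleton
    (((h.mem_iff a).1 haL).resolve_right ha₂)
  obtain ⟨v, hv⟩ := exists_isRotated_cons (((h.mem_iff b).1 hbL).resolve_left hb₁)
  refine ⟨u ++ [a, b], a :: b :: v,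
    (h.isRotated hu hv).grow (hu.mem_iff.not.1 hb₁) (hv.mem_iff.not.1 ha₂), ?_, ?_⟩
  · simp [hu.perm.length_eq]
  · simp [hv.perm.length_eq]

end IsCycleFactorization

theorem exists_isCycleFactorization {L : List α} (hL : L.Nodup) (m : ℕ) {s r : ℕ}
    (hs : s ≤ L.length) (hr : r ≤ L.length) (hsum : s + r = L.length + 1 + 2 * m) :
    ∃ l₁ l₂, IsCycleFactorization L l₁ l₂ ∧ l₁.length = s ∧ l₂.length = r := by
  induction m generalizing s r with
  | zero =>
    obtain ⟨p, x, q, rfl, hp⟩ : ∃ p x q, L = p ++ x :: q ∧ p.length = s - 1 :=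
      ⟨L.take (s - 1), L[s - 1], L.drop (s - 1 + 1),
        by rw [getElem_cons_drop, take_append_drop], by simp; omega⟩
    simp only [length_append, length_cons] at hs hr hsum
    exact ⟨p ++ [x], x :: q, .append_cons hL, by simp; omega, by simp; omega⟩
  | succ m ih =>
    obtain ⟨l₁, l₂, h, h₁, h₂⟩ := ih (s := s - 1) (r := r - 1) (by omega) (by omega) (by omega)
    obtain ⟨l₁', l₂', h', h₁', h₂'⟩ := h.exists_length_succ hL (by omega) (by omega)
    exact ⟨l₁', l₂', h', by omega, by omega⟩

end List

theorem fullCycleType_formPerm {d : ℕ} {l : List (Fin d)} (hl : l.Nodup) (hne : l ≠ []) :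
    fullCycleType l.formPerm = l.length ::ₘ Multiset.replicate (d - l.length) 1 := by
  obtain ⟨x, rfl⟩ | hlen : (∃ x, l = [x]) ∨ 2 ≤ l.length := by
    rcases l with _ | ⟨x, _ | ⟨y, l⟩⟩
    exacts [absurd rfl hne, .inl ⟨x, rfl⟩, .inr (by simp)]
  · have hd : 1 ≤ d := Fin.pos x
    rw [fullCycleType, List.formPerm_singleton, cycleType_one, support_one, Finset.card_empty,
      Nat.sub_zero, zero_add, List.length_singleton, ← Multiset.replicate_succ,
      Nat.sub_add_cancel hd]
  · have hsupp : l.formPerm.support.card = l.length := by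
      rw [List.support_formPerm_of_nodup l hl (by rintro x rfl; simp at hlen),
        List.toFinset_card_of_nodup hl]
    rw [fullCycleType, (List.isCycle_formPerm hl hlen).cycleType, hsupp, Multiset.singleton_add]

theorem lem_2_2_general (d s r : ℕ)
    (hsd : s ≤ d) (hrd : r ≤ d)
    (hsum : d + 1 ≤ s + r) (hpar : s + r ≡ d + 1 [MOD 2]) :
    ∃ σ₁ σ₂ : Equiv.Perm (Fin d),
      fullCycleType σ₁ = s ::ₘ Multiset.replicate (d - s) 1 ∧
      fullCycleType σ₂ = r ::ₘ Multiset.replicate (d - r) 1 ∧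
      fullCycleType (σ₁ * σ₂) = {d} := by
  obtain ⟨m, hm⟩ : ∃ m, s + r = d + 1 + 2 * m :=
    ⟨(s + r - (d + 1)) / 2, by unfold Nat.ModEq at hpar; omega⟩
  have hL := List.nodup_finRange d
  obtain ⟨l₁, l₂, h, rfl, rfl⟩ := List.exists_isCycleFactorization hL m
    (by simpa using hsd) (by simpa using hrd) (by simpa using hm)
  refine ⟨l₁.formPerm, l₂.formPerm,
    fullCycleType_formPerm h.nodup_left (List.ne_nil_of_length_pos (by omega)),
    fullCycleType_formPerm h.nodup_right (List.ne_nil_of_length_pos (by omega)), ?_⟩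
  rw [h.formPerm_mul_formPerm,
    fullCycleType_formPerm hL (List.ne_nil_of_length_pos (by rw [List.length_finRange]; omega)),
    List.length_finRange, Nat.sub_self]
  rfl

/-- Lemma 2.2: if `1 ≤ s, r ≤ d`, `s + r ≥ d + 1` and `s + r ≡ d + 1 (mod 2)`,
then there exist an `s`-cycle `σ₁` and an `r`-cycle `σ₂` in `S_d` whose
product `σ₁ σ₂` is a `d`-cycle.  (A cycle of length `k` is encoded by its
cycle type being `(k, 1, …, 1)`, counting fixed points as parts equal to 1.) -/
theorem lem_2_2 (d s r : ℕ) (hd : 1 ≤ d)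
    (hs1 : 1 ≤ s) (hsd : s ≤ d) (hr1 : 1 ≤ r) (hrd : r ≤ d)
    (hsum : d + 1 ≤ s + r) (hpar : s + r ≡ d + 1 [MOD 2]) :
    ∃ σ₁ σ₂ : Equiv.Perm (Fin d),
      fullCycleType σ₁ = s ::ₘ Multiset.replicate (d - s) 1 ∧
      fullCycleType σ₂ = r ::ₘ Multiset.replicate (d - r) 1 ∧
      fullCycleType (σ₁ * σ₂) = {d} :=
  lem_2_2_general d s r hsd hrd hsum hpar
end

section
/- Let n and k be positive integers and let τ₁, τ₂, σ be permutations in the symmetric group S_n with σ = τ₁ τ₂. Assume: σ is a single cycle; τ₁ is a product of pairwise disjoint cycles each of length k whose supports together cover all of {1,…,n} (so n = pk for some p); every cycle in the disjoint cycle decomposition of τ₂ has length at most k; and the subgroup generated by τ₁ and τ₂ acts transitively on {1, …, n}. Then every cycle μ in the disjoint cycle decomposition of τ₁ has at least 2 elements of its support in common with the support of σ. -/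
/-!
Let `μ` be a cycle of `τ₁` with support `S`, and suppose `S` meets the support of `σ` in at most
one point. Since `τ₂ = τ₁⁻¹ σ`, `τ₂` acts as `μ⁻¹` on every point of `S` fixed by `σ`. If `τ₂`
maps `S` into itself, then `S` is invariant under `⟨τ₁, τ₂⟩`, hence is everything by
transitivity, and then `σ` would move at most one point. Otherwise some `a ∈ S` has
`τ₂ a ∉ S`; then `a` is the only point of `S` moved by `σ`, so `τ₂` walks backwards along `μ`
from every other point of `S` down to `a`, and the `τ₂`-cycle of `a` contains `S ∪ {τ₂ a}`,
which has `k + 1` elements.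
-/

open Equiv Finset Pointwise

theorem Finset.eq_univ_of_mapsTo_generators {α : Type*} [Fintype α] [DecidableEq α]
    {s : Set (Perm α)} (htrans : ∀ x y : α, ∃ g ∈ Subgroup.closure s, g x = y)
    {T : Finset α} (hT : T.Nonempty) (hinv : ∀ g ∈ s, ∀ x ∈ T, g x ∈ T) : T = univ := by
  have hstab : Subgroup.closure s ≤ MulAction.stabilizer (Perm α) T := by
    refine (Subgroup.closure_le _).2 fun g hg => MulAction.mem_stabilizer_iff.2 ?_
    refine eq_of_subset_of_card_le ?_ (card_smul_finset g T).ge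
    intro y hy
    obtain ⟨x, hx, rfl⟩ := mem_smul_finset.1 hy
    exact hinv g hg x hx
  obtain ⟨x₀, hx₀⟩ := hT
  refine eq_univ_of_forall fun y => ?_
  obtain ⟨g, hg, rfl⟩ := htrans x₀ y
  rw [← MulAction.mem_stabilizer_iff.1 (hstab hg)]
  exact smul_mem_smul_finset hx₀

namespace Equiv.Perm

variable {α : Type*}

theorem sameCycle_of_forall_ne_eq [Finite α] {τ ν : Perm α} {a : α}
    (h : ∀ y, ν.SameCycle y a → y ≠ a → τ y = ν y) {x : α} (hx : ν.SameCycle x a) :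
    τ.SameCycle x a := by
  obtain ⟨j, hj⟩ := hx.exists_nat_pow_eq
  induction j generalizing x with
  | zero => rw [← hj]; rfl
  | succ j ih =>
    by_cases hxa : x = a
    · rw [hxa]
    · have hνx : ν.SameCycle (ν x) a := sameCycle_apply_left.2 hx
      have hτx : τ x = ν x := h x hx hxa
      exact sameCycle_apply_left.1 (hτx ▸ ih hνx (by rwa [pow_succ, mul_apply] at hj))

theorem inv_apply_mem_support {μ : Perm α} [Fintype α] [DecidableEq α] {x : α}
    (hx : x ∈ μ.support) : μ⁻¹ x ∈ μ.support := by
  rwa [← support_inv, apply_mem_support, support_inv]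

theorem inv_apply_eq_of_mem_cycleFactorsFinset [Fintype α] [DecidableEq α] {τ μ : Perm α}
    (hμ : μ ∈ τ.cycleFactorsFinset) {x : α} (hx : x ∈ μ.support) : τ⁻¹ x = μ⁻¹ x := by
  rw [inv_eq_iff_eq, ← (mem_cycleFactorsFinset_iff.1 hμ).2 _ (inv_apply_mem_support hx),
    ← mul_apply, mul_inv_cancel, one_apply]

theorem card_support_lt_card_support_cycleOf [Fintype α] [DecidableEq α] {τ μ : Perm α}
    (hμ : μ.IsCycle) {a : α} (ha : a ∈ μ.support) (hτa : τ a ∉ μ.support)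
    (h : ∀ y ∈ μ.support, y ≠ a → τ y = μ⁻¹ y) :
    #μ.support < #(τ.cycleOf a).support := by
  have haτ : a ∈ τ.support := mem_support.2 fun hfix => hτa (hfix.symm ▸ ha)
  have hsame : ∀ y ∈ μ.support, τ.SameCycle a y := fun y hy =>
    (sameCycle_of_forall_ne_eq (ν := μ⁻¹)
      (fun z hz hza => h z ((sameCycle_inv.1 hz).mem_support_iff.2 ha) hza)
      (sameCycle_inv.2 (hμ.sameCycle (mem_support.1 hy) (mem_support.1 ha)))).symm
  calc #μ.support < #(insert (τ a) μ.support) := by rw [card_insert_of_notMem hτa]; omega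
    _ ≤ #(τ.cycleOf a).support := card_le_card <| insert_subset
        (mem_support_cycleOf_iff.2 ⟨sameCycle_apply_right.2 SameCycle.rfl, haτ⟩)
        fun y hy => mem_support_cycleOf_iff.2 ⟨hsame y hy, haτ⟩

end Equiv.Perm

open Equiv.Perm in
theorem subcase_2_1_claim_general (n k : ℕ)
    (τ₁ τ₂ σ : Equiv.Perm (Fin n))
    (hστ : σ = τ₁ * τ₂)
    (hσ : σ.IsCycle)
    (hτ₁len : ∀ c ∈ τ₁.cycleFactorsFinset, c.support.card = k)
    (hτ₂len : ∀ c ∈ τ₂.cycleFactorsFinset, c.support.card ≤ k)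
    (htrans : ∀ x y : Fin n,
      ∃ g ∈ Subgroup.closure ({τ₁, τ₂} : Set (Equiv.Perm (Fin n))), g x = y) :
    ∀ μ ∈ τ₁.cycleFactorsFinset, 2 ≤ (μ.support ∩ σ.support).card := by
  intro μ hμ
  by_contra! hcard
  obtain ⟨hμc, hμτ₁⟩ := mem_cycleFactorsFinset_iff.1 hμ
  have hτ₁S : ∀ x ∈ μ.support, τ₁ x ∈ μ.support := fun x hx => hμτ₁ x hx ▸ apply_mem_support.2 hx
  have hτ₂_eq : ∀ x ∈ μ.support, σ x = x → τ₂ x = μ⁻¹ x := fun x hx hσx => by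
    rw [← inv_apply_eq_of_mem_cycleFactorsFinset hμ hx, eq_inv_iff_eq, ← mul_apply, ← hστ, hσx]
  by_cases hS : ∀ x ∈ μ.support, τ₂ x ∈ μ.support
  · have hSuniv : μ.support = univ := Finset.eq_univ_of_mapsTo_generators htrans
      hμc.nonempty_support (by rintro g (rfl | rfl); exacts [hτ₁S, hS])
    have := hσ.two_le_card_support
    rw [hSuniv, univ_inter] at hcard
    omega
  push Not at hS
  obtain ⟨a, haS, hτ₂a⟩ := hS
  have haσ : σ a ≠ a := fun h => hτ₂a (hτ₂_eq a haS h ▸ inv_apply_mem_support haS)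
  have hfix : ∀ y ∈ μ.support, y ≠ a → σ y = y := fun y hy hya => by
    by_contra h
    exact hya (card_le_one.1 (by omega) y (mem_inter.2 ⟨hy, mem_support.2 h⟩)
      a (mem_inter.2 ⟨haS, mem_support.2 haσ⟩))
  have hlt := card_support_lt_card_support_cycleOf hμc haS hτ₂a
    fun y hy hya => hτ₂_eq y hy (hfix y hy hya)
  have hle := hτ₂len _ (cycleOf_mem_cycleFactorsFinset_iff.2
    (mem_support.2 fun h => hτ₂a (h ▸ haS)))
  have := hτ₁len μ hμ
  omega

/-- The claim in Subcase 2.1 of the proof of Proposition 2.1: if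
`σ = τ₁ τ₂` in `S_n` with `σ` a single cycle, `τ₁` a product of pairwise
disjoint `k`-cycles whose supports cover `{1,…,n}`, every cycle of `τ₂` of
length at most `k`, and `⟨τ₁, τ₂⟩` transitive on `{1,…,n}`, then every cycle
`μ` in the disjoint cycle decomposition of `τ₁` has at least `2` elements of
its support in common with the support of `σ`. -/
theorem subcase_2_1_claim (n k : ℕ) (hn : 0 < n) (hk : 0 < k)
    (τ₁ τ₂ σ : Equiv.Perm (Fin n))
    (hστ : σ = τ₁ * τ₂)
    (hσ : σ.IsCycle)
    (hτ₁len : ∀ c ∈ τ₁.cycleFactorsFinset, c.support.card = k)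
    (hτ₁cover : τ₁.support = Finset.univ)
    (hτ₂len : ∀ c ∈ τ₂.cycleFactorsFinset, c.support.card ≤ k)
    (htrans : ∀ x y : Fin n,
      ∃ g ∈ Subgroup.closure ({τ₁, τ₂} : Set (Equiv.Perm (Fin n))), g x = y) :
    ∀ μ ∈ τ₁.cycleFactorsFinset, 2 ≤ (μ.support ∩ σ.support).card :=
  subcase_2_1_claim_general n k τ₁ τ₂ σ hστ hσ hτ₁len hτ₂len htrans
end
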